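/- Let A and B be positive invertible operators with m·I ≤ A, B ≤ M·I for 0 < m ≤ M and set h = M/m. Then for every v ∈ [0,1], (1−v)A + vB ≤ S(h) · (A #_v B), where S(h) = (h−1)h^{1/(h−1)}/(e log h) is the Specht ratio (S(1) = 1). -/

import Mathlib

/-!
Conjugating by `A^{-1/2}` reduces the claim to `A = 1` and `C = A^{-1/2} B A^{-1/2}`, whose
spectrum lies in `[1/h, h]`. By the functional calculus it then suffices to prove the scalar
inequality `1 - v + v t ≤ S(h) t^v` for `t ∈ [1/h, h]`. Its right side minus its left side is
concave in `t`, so it is enough to check the two endpoints. Both are instances of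
`1 + w (h - 1) ≤ S(h) h^w`, which is `e y ≤ e^y` at `y = (1/(h-1) + w) log h`.
-/

/-- The `t`-weighted geometric mean `A #_t B = A^{1/2} (A^{-1/2} B A^{-1/2})^t A^{1/2}`,
defined via the continuous functional calculus real power. -/
noncomputable def geomMean {H : Type*} [NormedAddCommGroup H] [InnerProductSpace ℂ H]
    [CompleteSpace H] (A B : H →L[ℂ] H) (t : ℝ) : H →L[ℂ] H :=
  A ^ ((1 : ℝ) / 2) * (A ^ (-(1 : ℝ) / 2) * B * A ^ (-(1 : ℝ) / 2)) ^ t * A ^ ((1 : ℝ) / 2)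

/-- The Specht ratio `S(h) = (h-1) h^{1/(h-1)} / (e log h)` for `h ≠ 1`, with `S(1) = 1`. -/
noncomputable def specht (h : ℝ) : ℝ :=
  if h = 1 then 1 else (h - 1) * h ^ (1 / (h - 1)) / (Real.exp 1 * Real.log h)

open Real

lemma one_sub_add_mul_le_specht_mul_rpow {h : ℝ} (hh : 1 < h) (w : ℝ) :
    1 - w + w * h ≤ specht h * h ^ w := by
  have hL : 0 < log h := log_pos hh
  have hh1 : 0 < h - 1 := by linarith
  have hS : specht h * h ^ w
      = (h - 1) / (exp 1 * log h) * exp ((1 / (h - 1) + w) * log h) := by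
    rw [specht, if_neg hh.ne', rpow_def_of_pos (by linarith), rpow_def_of_pos (by linarith),
      add_mul, exp_add]
    ring_nf
  calc 1 - w + w * h = (h - 1) / (exp 1 * log h) * (exp 1 * ((1 / (h - 1) + w) * log h)) := by
        field_simp
        ring
    _ ≤ specht h * h ^ w := hS ▸ mul_le_mul_of_nonneg_left exp_one_mul_le_exp (by positivity)

lemma one_le_specht {h : ℝ} (hh : 1 < h) : 1 ≤ specht h := by
  simpa using one_sub_add_mul_le_specht_mul_rpow hh 0

lemma one_sub_add_mul_inv_le_specht_mul_inv_rpow {h : ℝ} (hh : 1 < h) (v : ℝ) :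
    1 - v + v * h⁻¹ ≤ specht h * h⁻¹ ^ v := by
  have hpos : 0 < h := by linarith
  have hend := one_sub_add_mul_le_specht_mul_rpow hh (1 - v)
  rw [rpow_sub hpos, rpow_one] at hend
  rw [inv_rpow hpos.le]
  calc 1 - v + v * h⁻¹ = (1 - (1 - v) + (1 - v) * h) / h := by field_simp; ring
    _ ≤ specht h * (h / h ^ v) / h := by gcongr
    _ = specht h * (h ^ v)⁻¹ := by field_simp

lemma one_sub_add_mul_le_specht_mul_rpow_of_mem_Icc {h v t : ℝ} (hh : 1 ≤ h) (hv0 : 0 ≤ v)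
    (hv1 : v ≤ 1) (ht : t ∈ Set.Icc h⁻¹ h) : 1 - v + v * t ≤ specht h * t ^ v := by
  rcases hh.eq_or_lt with rfl | hh
  · obtain rfl : t = 1 := by
      simpa only [inv_one, Set.Icc_self, Set.mem_singleton_iff] using ht
    simp [specht]
  have hconc : ConcaveOn ℝ (Set.Ici 0) fun t => specht h * t ^ v - (1 - v + v * t) :=
    ((concaveOn_rpow hv0 hv1).smul (zero_le_one.trans (one_le_specht hh))).sub
      ((convexOn_const (1 - v) (convex_Ici 0)).add ((convexOn_id (convex_Ici (0 : ℝ))).smul hv0))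
  have h0 : (0 : ℝ) ≤ h := by linarith
  have hmin := hconc.min_le_of_mem_Icc (inv_nonneg.2 h0) h0 ht
  have hlo := one_sub_add_mul_inv_le_specht_mul_inv_rpow hh v
  have hhi := one_sub_add_mul_le_specht_mul_rpow hh v
  linarith [le_min (sub_nonneg.2 hlo) (sub_nonneg.2 hhi)]

section CStarAlgebra

variable {𝒜 : Type*} [CStarAlgebra 𝒜] [PartialOrder 𝒜] [StarOrderedRing 𝒜]

lemma one_sub_smul_one_add_smul_le_specht_smul_rpow {c : 𝒜} {h v : ℝ} (hh : 1 ≤ h)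
    (hlo : h⁻¹ • 1 ≤ c) (hhi : c ≤ h • 1) (hv0 : 0 ≤ v) (hv1 : v ≤ 1) :
    (1 - v) • 1 + v • c ≤ specht h • c ^ v := by
  have hc : 0 ≤ c := (smul_nonneg (by positivity) zero_le_one).trans hlo
  have hspec : ∀ t ∈ spectrum ℝ c, t ∈ Set.Icc h⁻¹ h := fun t ht =>
    ⟨(algebraMap_le_iff_le_spectrum (r := h⁻¹) (a := c)).mp
        (by rwa [Algebra.algebraMap_eq_smul_one]) t ht,
      (le_algebraMap_iff_spectrum_le (r := h) (a := c)).mp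
        (by rwa [Algebra.algebraMap_eq_smul_one]) t ht⟩
  have hpow : Continuous fun t : ℝ => t ^ v := continuous_rpow_const hv0
  calc (1 - v) • 1 + v • c = cfc (fun t : ℝ => 1 - v + v * t) c := by
        rw [cfc_add .., cfc_const .., cfc_const_mul_id .., Algebra.algebraMap_eq_smul_one]
    _ ≤ cfc (fun t : ℝ => specht h * t ^ v) c :=
        cfc_mono (fun t ht => one_sub_add_mul_le_specht_mul_rpow_of_mem_Icc hh hv0 hv1
          (hspec t ht)) (hg := (continuous_const.mul hpow).continuousOn)
    _ = specht h • c ^ v := by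
        rw [cfc_const_mul _ _ _ hpow.continuousOn, CFC.rpow_eq_cfc_real hc]

lemma rpow_one_half_conjugate_rpow_neg_one_half_conjugate {a : 𝒜} (ha : IsStrictlyPositive a)
    (b : 𝒜) :
    a ^ ((1 : ℝ) / 2) * (a ^ (-(1 : ℝ) / 2) * b * a ^ (-(1 : ℝ) / 2)) * a ^ ((1 : ℝ) / 2)
      = b := by
  simp only [neg_div, ← mul_assoc, CFC.rpow_mul_rpow_neg _ ha, one_mul]
  rw [mul_assoc, CFC.rpow_neg_mul_rpow _ ha, mul_one]

lemma conjugate_le_div_smul_one {x a b : 𝒜} (hx : IsSelfAdjoint x) (hxax : x * a * x = 1)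
    {m M : ℝ} (hm : 0 < m) (hM : 0 ≤ M) (ha : m • 1 ≤ a) (hb : b ≤ M • 1) :
    x * b * x ≤ (M / m) • 1 := by
  have hxx : m • (x * x) ≤ 1 := by
    simpa only [smul_mul_assoc, mul_smul_comm, mul_one, hxax] using hx.conjugate_le_conjugate ha
  calc x * b * x ≤ M • (x * x) := by
        simpa only [smul_mul_assoc, mul_smul_comm, mul_one] using hx.conjugate_le_conjugate hb
    _ = (M / m) • (m • (x * x)) := by rw [smul_smul, div_mul_cancel₀ _ hm.ne']
    _ ≤ (M / m) • 1 := smul_le_smul_of_nonneg_left hxx (by positivity)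

lemma div_smul_one_le_conjugate {x a b : 𝒜} (hx : IsSelfAdjoint x) (hxax : x * a * x = 1)
    {m M : ℝ} (hm : 0 ≤ m) (hM : 0 < M) (ha : a ≤ M • 1) (hb : m • 1 ≤ b) :
    (m / M) • 1 ≤ x * b * x := by
  have hxx : 1 ≤ M • (x * x) := by
    simpa only [smul_mul_assoc, mul_smul_comm, mul_one, hxax] using hx.conjugate_le_conjugate ha
  calc (m / M) • (1 : 𝒜) ≤ (m / M) • (M • (x * x)) :=
        smul_le_smul_of_nonneg_left hxx (by positivity)
    _ = m • (x * x) := by rw [smul_smul, div_mul_cancel₀ _ hM.ne']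
    _ ≤ x * b * x := by
        simpa only [smul_mul_assoc, mul_smul_comm, mul_one] using hx.conjugate_le_conjugate hb

end CStarAlgebra

theorem specht_reverse_amgm_general
    {H : Type*} [NormedAddCommGroup H] [InnerProductSpace ℂ H] [CompleteSpace H]
    (A B : H →L[ℂ] H)
    (m M : ℝ) (hm : 0 < m) (hmM : m ≤ M)
    (hA1 : m • (1 : H →L[ℂ] H) ≤ A) (hA2 : A ≤ M • (1 : H →L[ℂ] H))
    (hB1 : m • (1 : H →L[ℂ] H) ≤ B) (hB2 : B ≤ M • (1 : H →L[ℂ] H))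
    (v : ℝ) (hv0 : 0 ≤ v) (hv1 : v ≤ 1) :
    (1 - v) • A + v • B ≤ specht (M / m) • geomMean A B v := by
  have hA : IsStrictlyPositive A := (isStrictlyPositive_one.smul hm).of_le hA1
  set X := A ^ (-(1 : ℝ) / 2)
  set Y := A ^ ((1 : ℝ) / 2)
  set C := X * B * X
  have hXsa : IsSelfAdjoint X := .of_nonneg CFC.rpow_nonneg
  have hXAX : X * A * X = 1 := by
    simpa only [X, neg_div] using CFC.conjugate_rpow_neg_one_half A
  have hM : 0 < M := hm.trans_le hmM
  have hlo : (M / m)⁻¹ • 1 ≤ C :=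
    inv_div M m ▸ div_smul_one_le_conjugate hXsa hXAX hm.le hM hA2 hB1
  have hhi : C ≤ (M / m) • 1 := conjugate_le_div_smul_one hXsa hXAX hm hM.le hA1 hB2
  have hYY : Y * Y = A := by
    simp only [Y]
    rw [← CFC.sqrt_eq_rpow, CFC.sqrt_mul_sqrt_self A hA.nonneg]
  have hYCY : Y * C * Y = B := rpow_one_half_conjugate_rpow_neg_one_half_conjugate hA B
  calc (1 - v) • A + v • B = Y * ((1 - v) • 1 + v • C) * Y := by
        simp only [mul_add, add_mul, smul_mul_assoc, mul_smul_comm, mul_one, hYY, hYCY]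
    _ ≤ Y * (specht (M / m) • C ^ v) * Y :=
        (IsSelfAdjoint.of_nonneg CFC.rpow_nonneg).conjugate_le_conjugate
          (one_sub_smul_one_add_smul_le_specht_smul_rpow ((one_le_div hm).2 hmM) hlo hhi hv0 hv1)
    _ = specht (M / m) • geomMean A B v := by
        simp only [geomMean, smul_mul_assoc, mul_smul_comm]; rfl

/-- For positive invertible operators `A, B` with `m • 1 ≤ A, B ≤ M • 1`, `0 < m ≤ M`,
`h = M/m`, and every `v ∈ [0,1]`, one has `(1-v)A + vB ≤ S(h) • (A #ᵥ B)`. -/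
theorem specht_reverse_amgm
    {H : Type*} [NormedAddCommGroup H] [InnerProductSpace ℂ H] [CompleteSpace H]
    (A B : H →L[ℂ] H) (hA : 0 ≤ A) (hB : 0 ≤ B)
    (hAinv : Invertible A) (hBinv : Invertible B)
    (m M : ℝ) (hm : 0 < m) (hmM : m ≤ M)
    (hA1 : m • (1 : H →L[ℂ] H) ≤ A) (hA2 : A ≤ M • (1 : H →L[ℂ] H))
    (hB1 : m • (1 : H →L[ℂ] H) ≤ B) (hB2 : B ≤ M • (1 : H →L[ℂ] H))
    (v : ℝ) (hv0 : 0 ≤ v) (hv1 : v ≤ 1) :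
    (1 - v) • A + v • B ≤ specht (M / m) • geomMean A B v :=
  specht_reverse_amgm_general A B m M hm hmM hA1 hA2 hB1 hB2 v hv0 hv1
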